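/- Let g be a finite-dimensional real Lie algebra and φ: g → g a Lie algebra automorphism; set A = φ − id and assume ker(A²) = ker(A). Then h := ker A is a Lie subalgebra of g, the subspace m := A(g) is invariant under φ, g = h ⊕ m as a direct sum of vector spaces, and [h, m] ⊆ m. (Every regular Φ-space is reductive, with canonical reductive decomposition g = h ⊕ m, m = A(g).) -/

import Mathlib

/-!
Writing `A = φ - 1`, the kernel `ker A` is the fixed-point set of `φ`, hence closed under the
bracket. The maps `φ` and, for a fixed point `X`, `ad X` commute with `A`, so they preserve its
range. Finally `ker A² = ker A` makes `ker A` and `range A` disjoint, and rank–nullity turns this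
into a direct sum decomposition.
-/

namespace Module.End

theorem disjoint_ker_range_of_ker_sq_eq_ker {R M : Type*} [Ring R] [AddCommGroup M] [Module R M]
    {A : End R M} (h : LinearMap.ker (A ^ 2) = LinearMap.ker A) :
    Disjoint (LinearMap.ker A) (LinearMap.range A) := by
  rw [Submodule.disjoint_def]
  rintro _ hx ⟨y, rfl⟩
  have hy : y ∈ LinearMap.ker (A ^ 2) := by rwa [LinearMap.mem_ker, sq, mul_apply]
  rwa [h] at hy

theorem isCompl_ker_range_of_ker_sq_eq_ker {K V : Type*} [Field K] [AddCommGroup V] [Module K V]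
    [FiniteDimensional K V] {A : End K V} (h : LinearMap.ker (A ^ 2) = LinearMap.ker A) :
    IsCompl (LinearMap.ker A) (LinearMap.range A) :=
  (Submodule.isCompl_iff_disjoint _ _ (by rw [add_comm, A.finrank_range_add_finrank_ker])).mpr
    (disjoint_ker_range_of_ker_sq_eq_ker h)

theorem apply_mem_range_of_commute {R M : Type*} [Semiring R] [AddCommMonoid M] [Module R M]
    {f A : End R M} (h : Commute f A) {x : M} (hx : x ∈ LinearMap.range A) :
    f x ∈ LinearMap.range A := by
  obtain ⟨y, rfl⟩ := hx
  exact ⟨f y, by rw [← mul_apply, ← h.eq, mul_apply]⟩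

end Module.End

namespace LieHom

variable {R L : Type*} [CommRing R] [LieRing L] [LieAlgebra R L] (φ : L →ₗ⁅R⁆ L)

theorem mem_ker_sub_id_iff {x : L} :
    x ∈ LinearMap.ker ((φ : L →ₗ[R] L) - LinearMap.id) ↔ φ x = x := by
  simp [sub_eq_zero]

theorem lie_mem_ker_sub_id {x y : L} (hx : x ∈ LinearMap.ker ((φ : L →ₗ[R] L) - LinearMap.id))
    (hy : y ∈ LinearMap.ker ((φ : L →ₗ[R] L) - LinearMap.id)) :
    ⁅x, y⁆ ∈ LinearMap.ker ((φ : L →ₗ[R] L) - LinearMap.id) := by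
  rw [mem_ker_sub_id_iff] at hx hy ⊢
  rw [map_lie, hx, hy]

theorem commute_sub_id : Commute (φ : L →ₗ[R] L) ((φ : L →ₗ[R] L) - LinearMap.id) :=
  (Commute.refl _).sub_right (Commute.one_right _)

theorem commute_ad_sub_id {x : L} (hx : φ x = x) :
    Commute (LieAlgebra.ad R L x) ((φ : L →ₗ[R] L) - LinearMap.id) := by
  ext y
  simp [lie_sub, map_lie, hx]

end LieHom

theorem stmt_1 (g : Type*) [LieRing g] [LieAlgebra ℝ g] [FiniteDimensional ℝ g]
    (φ : g ≃ₗ⁅ℝ⁆ g)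
    (A : Module.End ℝ g) (hA : A = (φ.toLieHom : g →ₗ[ℝ] g) - LinearMap.id)
    (hreg : LinearMap.ker (A ^ 2) = LinearMap.ker A) :
    (∀ X ∈ LinearMap.ker A, ∀ Y ∈ LinearMap.ker A, ⁅X, Y⁆ ∈ LinearMap.ker A) ∧
    (∀ X ∈ LinearMap.range A, φ X ∈ LinearMap.range A) ∧
    IsCompl (LinearMap.ker A) (LinearMap.range A) ∧
    (∀ X ∈ LinearMap.ker A, ∀ Y ∈ LinearMap.range A, ⁅X, Y⁆ ∈ LinearMap.range A) := by
  subst hA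
  refine ⟨fun X hX Y hY ↦ φ.toLieHom.lie_mem_ker_sub_id hX hY,
    fun X hX ↦ Module.End.apply_mem_range_of_commute φ.toLieHom.commute_sub_id hX,
    Module.End.isCompl_ker_range_of_ker_sq_eq_ker hreg, fun X hX Y hY ↦ ?_⟩
  rw [LieHom.mem_ker_sub_id_iff] at hX
  exact Module.End.apply_mem_range_of_commute (φ.toLieHom.commute_ad_sub_id hX) hY
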